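/- arXiv:2008.07375 — 7 statements merged into one kernel-verified Lean document; each statement's English description precedes it below -/
import Mathlib

section
/- Let L be a Hermitian n×n complex matrix, let γ be a rank-one projector and Γ a density matrix on ℂⁿ. Then |−4·tr(LγLΓ) + 2·tr(Γ(Lγ+γL))·(tr(ΓL)+tr(γL)) − 4·tr(Γγ)·tr(ΓL)·tr(γL)| ≤ 20·‖L‖²·tr((I−γ)Γ). -/
open Matrix ComplexOrder

/-- The operator norm of a matrix induced by the Euclidean norm on `ℂⁿ`. -/
noncomputable def euclideanOpNorm {n : ℕ} (L : Matrix (Fin n) (Fin n) ℂ) : ℝ :=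
  ‖Matrix.toEuclideanCLM (𝕜 := ℂ) L‖

/-!
Put `Q = 1 - γ` and `ε = tr (QΓ) = tr (QΓQ)`. An idempotent of trace one has rank one, and for
a rank-one `γ` the expression equals `-4 X + 2 s (s + c + (tr (Γγ) - 1) tr (γL))`, where
`X = tr (LγL · QΓQ)`, `c = tr (L · QΓQ)` and `s = tr (γΓQLγ) + tr (γLQΓγ)` collects the
off-diagonal blocks of `Γ`. Since `QΓQ ≥ 0` has trace `ε`, `|X| ≤ ‖L‖² ε` and `|c| ≤ ‖L‖ ε`;
also `|tr (Γγ) - 1| = ε`. Cauchy–Schwarz for the form `(A, B) ↦ tr (B Γ Aᴴ)` bounds each term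
of `s` by `(tr (γΓγ) · X)^(1/2) ≤ ‖L‖ ε^(1/2)`, and the three contributions add up to
`(4 + 8 + 8) ‖L‖² ε`.
-/

open scoped Matrix.Norms.L2Operator MatrixOrder

theorem Complex.norm_le_re_of_neg_le_of_le {z w : ℂ} (h₁ : -w ≤ z) (h₂ : z ≤ w) :
    ‖z‖ ≤ w.re := by
  rw [Complex.le_def] at h₁ h₂
  simp only [Complex.neg_re, Complex.neg_im] at h₁
  have hz : z.im = 0 := by linarith [h₁.2, h₂.2]
  rw [← Complex.abs_re_eq_norm.mpr hz, abs_le]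
  exact ⟨by linarith [h₁.1], h₂.1⟩

namespace Matrix

variable {n : Type*} [Fintype n]

theorem trace_vecMulVec' {R : Type*} [CommRing R] (u v : n → R) :
    (vecMulVec u v).trace = v ⬝ᵥ u := by
  rw [trace_vecMulVec, dotProduct_comm]

theorem trace_mono {A B : Matrix n n ℂ} (h : A ≤ B) : A.trace ≤ B.trace := by
  simpa [trace_sub] using (nonneg_iff_posSemidef.mp (sub_nonneg.mpr h)).trace_nonneg

theorem PosSemidef.norm_trace {B : Matrix n n ℂ} (hB : B.PosSemidef) :
    ‖B.trace‖ = B.trace.re :=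
  (Complex.re_eq_norm.mpr hB.trace_nonneg).symm

theorem PosSemidef.sq_norm_trace_mul_conjTranspose_le {𝕜 : Type*} [RCLike 𝕜]
    {Γ : Matrix n n 𝕜} (hΓ : Γ.PosSemidef) (A B : Matrix n n 𝕜) :
    ‖(B * Γ * Aᴴ).trace‖ ^ 2 ≤
      RCLike.re (A * Γ * Aᴴ).trace * RCLike.re (B * Γ * Bᴴ).trace := by
  let _ := Γ.toMatrixSeminormedAddCommGroup hΓ
  let _ := Γ.toMatrixInnerProductSpace hΓ
  have h := inner_mul_inner_self_le (𝕜 := 𝕜) A B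
  rwa [norm_inner_symm B A, ← sq] at h

variable [DecidableEq n]

theorem trace_mul_eq_one_sub {R : Type*} [CommRing R] {Γ : Matrix n n R} (γ : Matrix n n R)
    (hΓ : Γ.trace = 1) : (Γ * γ).trace = 1 - ((1 - γ) * Γ).trace := by
  rw [sub_mul, one_mul, trace_sub, hΓ, trace_mul_comm, sub_sub_cancel]

theorem exists_eq_vecMulVec_of_isIdempotentElem {K : Type*} [Field K] [CharZero K]
    {P : Matrix n n K} (hP : IsIdempotentElem P) (htr : P.trace = 1) :
    ∃ u v : n → K, P = vecMulVec u v := by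
  have hrank : Module.finrank K (LinearMap.range (toLin' P)) = 1 := by
    have hidem : IsIdempotentElem (toLin' P) := hP.map (toLinAlgEquiv' (R := K) (n := n))
    have h := (LinearMap.IsIdempotentElem.isProj_range _ hidem).trace
    rw [trace_toLin'_eq, htr] at h
    exact_mod_cast h.symm
  obtain ⟨u, -, hu⟩ := finrank_eq_one_iff'.mp hrank
  choose v hv using fun j ↦ hu ⟨P *ᵥ Pi.single j 1, LinearMap.mem_range_self _ _⟩
  refine ⟨u, v, ext fun i j ↦ ?_⟩
  have := congrFun (congrArg Subtype.val (hv j)) i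
  simpa [mulVec_single, vecMulVec_apply, mul_comm] using this.symm

/-- With `γ = u vᵀ` every trace below becomes a polynomial in scalars `v ⬝ᵥ M *ᵥ u`, among which
the identity holds formally. -/
theorem trace_expansion_of_eq_vecMulVec {R : Type*} [CommRing R] (L Γ : Matrix n n R)
    {γ : Matrix n n R} {u v : n → R} (hγ : γ = vecMulVec u v) (htr : γ.trace = 1) :
    -4 * (L * γ * L * Γ).trace
        + 2 * (Γ * (L * γ + γ * L)).trace * ((Γ * L).trace + (γ * L).trace)
        - 4 * (Γ * γ).trace * (Γ * L).trace * (γ * L).trace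
      = -4 * (L * γ * L * ((1 - γ) * Γ * (1 - γ))).trace
        + 2 * ((γ * Γ * ((1 - γ) * L * γ)).trace + (γ * L * (1 - γ) * Γ * γ).trace)
          * ((γ * Γ * ((1 - γ) * L * γ)).trace + (γ * L * (1 - γ) * Γ * γ).trace
            + (L * ((1 - γ) * Γ * (1 - γ))).trace + ((Γ * γ).trace - 1) * (γ * L).trace) := by
  have hvu : v ⬝ᵥ u = 1 := by rw [← trace_vecMulVec', ← hγ, htr]
  subst hγ
  simp only [mul_add, add_mul, mul_sub, sub_mul, mul_one, one_mul, mul_vecMulVec, vecMulVec_mul,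
    vecMulVec_mulVec, op_smul_eq_smul, trace_add, trace_sub, trace_smul, trace_vecMulVec',
    ← dotProduct_mulVec, smul_eq_mul, smul_vecMulVec, smul_mulVec, Matrix.mul_smul,
    Matrix.smul_mul, hvu]
  rw [trace_mul_comm L Γ]
  ring

theorem IsHermitian.trace_mul_le {A B : Matrix n n ℂ} (hA : A.IsHermitian)
    (hB : B.PosSemidef) : (A * B).trace ≤ ‖A‖ * B.trace := by
  obtain ⟨C, rfl⟩ := CStarAlgebra.nonneg_iff_eq_star_mul_self.mp hB.nonneg
  have h := trace_mono (CStarAlgebra.star_right_conjugate_le_norm_smul (a := C) hA.isSelfAdjoint)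
  rw [trace_smul, trace_mul_cycle, trace_mul_comm C, Complex.real_smul] at h
  rwa [trace_mul_comm]

theorem IsHermitian.norm_trace_mul_le {A B : Matrix n n ℂ} (hA : A.IsHermitian)
    (hB : B.PosSemidef) : ‖(A * B).trace‖ ≤ ‖A‖ * B.trace.re := by
  have h := hA.neg.trace_mul_le hB
  rw [norm_neg, neg_mul, trace_neg, neg_le] at h
  have hre : ((‖A‖ : ℂ) * B.trace).re = ‖A‖ * B.trace.re := by simp
  exact hre ▸ Complex.norm_le_re_of_neg_le_of_le h (hA.trace_mul_le hB)

end Matrix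

namespace IsStarProjection

variable {n : Type*} [Fintype n] {γ Γ L : Matrix n n ℂ}

theorem posSemidef_mul_mul_self (hγ : IsStarProjection γ) (hΓ : Γ.PosSemidef) :
    (γ * Γ * γ).PosSemidef := by
  simpa [← star_eq_conjTranspose, hγ.isSelfAdjoint.star_eq] using hΓ.mul_mul_conjTranspose_same γ

theorem trace_mul_mul_self (hγ : IsStarProjection γ) (Γ : Matrix n n ℂ) :
    (γ * Γ * γ).trace = (γ * Γ).trace := by
  rw [trace_mul_comm, ← Matrix.mul_assoc, hγ.isIdempotentElem.eq]

variable [DecidableEq n]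

theorem norm_trace_mul_sub_one (hγ : IsStarProjection γ) (hΓ : Γ.PosSemidef)
    (hΓtr : Γ.trace = 1) : ‖(Γ * γ).trace - 1‖ = ((1 - γ) * Γ).trace.re := by
  rw [trace_mul_eq_one_sub γ hΓtr, sub_sub_cancel_left, norm_neg,
    ← hγ.one_sub.trace_mul_mul_self, (hγ.one_sub.posSemidef_mul_mul_self hΓ).norm_trace]

theorem re_trace_compl_mul_le_one (hγ : IsStarProjection γ) (hΓ : Γ.PosSemidef)
    (hΓtr : Γ.trace = 1) : ((1 - γ) * Γ).trace.re ≤ 1 := by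
  have h := (Complex.nonneg_iff.mp (hγ.posSemidef_mul_mul_self hΓ).trace_nonneg).1
  rw [hγ.trace_mul_mul_self, trace_mul_comm, trace_mul_eq_one_sub γ hΓtr, Complex.sub_re,
    Complex.one_re] at h
  linarith

theorem norm_trace_mul_le_of_trace_eq_one (hγ : IsStarProjection γ) (hγtr : γ.trace = 1)
    (hL : L.IsHermitian) : ‖(γ * L).trace‖ ≤ ‖L‖ := by
  have h := hL.norm_trace_mul_le (nonneg_iff_posSemidef.mp hγ.nonneg)
  rwa [trace_mul_comm, hγtr, Complex.one_re, mul_one] at h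

theorem norm_trace_mul_compl_conj_le (hγ : IsStarProjection γ) (hΓ : Γ.PosSemidef)
    (hL : L.IsHermitian) :
    ‖(L * ((1 - γ) * Γ * (1 - γ))).trace‖ ≤ ‖L‖ * ((1 - γ) * Γ).trace.re := by
  rw [← hγ.one_sub.trace_mul_mul_self]
  exact hL.norm_trace_mul_le (hγ.one_sub.posSemidef_mul_mul_self hΓ)

theorem norm_trace_conj_mul_compl_conj_le (hγ : IsStarProjection γ) (hΓ : Γ.PosSemidef)
    (hL : L.IsHermitian) :
    ‖(L * γ * L * ((1 - γ) * Γ * (1 - γ))).trace‖ ≤ ‖L‖ ^ 2 * ((1 - γ) * Γ).trace.re := by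
  have hLγL : IsSelfAdjoint (L * γ * L) := by
    simpa [hL.star_eq] using hγ.isSelfAdjoint.conjugate L
  have hnorm : ‖L * γ * L‖ ≤ ‖L‖ ^ 2 := calc
    ‖L * γ * L‖ ≤ ‖L‖ * ‖γ‖ * ‖L‖ := norm_mul₃_le
    _ ≤ ‖L‖ * 1 * ‖L‖ := by gcongr; exact hγ.norm_le
    _ = ‖L‖ ^ 2 := by ring
  have hB := hγ.one_sub.posSemidef_mul_mul_self hΓ
  have hε := (Complex.nonneg_iff.mp hB.trace_nonneg).1
  rw [hγ.one_sub.trace_mul_mul_self] at hε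
  calc _ ≤ ‖L * γ * L‖ * ((1 - γ) * Γ * (1 - γ)).trace.re := hLγL.isHermitian.norm_trace_mul_le hB
    _ ≤ ‖L‖ ^ 2 * ((1 - γ) * Γ).trace.re := by
      rw [hγ.one_sub.trace_mul_mul_self]
      exact mul_le_mul_of_nonneg_right hnorm hε

theorem sq_norm_trace_off_diagonal_le (hγ : IsStarProjection γ) (hΓ : Γ.PosSemidef)
    (hΓtr : Γ.trace = 1) (hL : L.IsHermitian) :
    ‖(γ * Γ * ((1 - γ) * L * γ)).trace‖ ^ 2 ≤ ‖L‖ ^ 2 * ((1 - γ) * Γ).trace.re ∧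
      ‖(γ * L * (1 - γ) * Γ * γ).trace‖ ^ 2 ≤ ‖L‖ ^ 2 * ((1 - γ) * Γ).trace.re := by
  set A := γ * L * (1 - γ)
  have hγH : γᴴ = γ := hγ.isSelfAdjoint.star_eq
  have hAH : Aᴴ = (1 - γ) * L * γ := by
    simp [A, conjTranspose_mul, conjTranspose_sub, hγH, hL.eq, Matrix.mul_assoc]
  have hX : (A * Γ * Aᴴ).trace = (L * γ * L * ((1 - γ) * Γ * (1 - γ))).trace := by
    rw [hAH]
    simp only [A, Matrix.mul_assoc]
    rw [trace_mul_comm γ, trace_mul_comm L]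
    simp only [Matrix.mul_assoc, hγ.isIdempotentElem.eq]
    rw [trace_mul_comm γ]
    simp only [Matrix.mul_assoc]
  have hε₀ : 0 ≤ ((1 - γ) * Γ).trace.re := hγ.norm_trace_mul_sub_one hΓ hΓtr ▸ norm_nonneg _
  have hε₁ := hγ.re_trace_compl_mul_le_one hΓ hΓtr
  have hp : (γ * Γ * γᴴ).trace.re = 1 - ((1 - γ) * Γ).trace.re := by
    rw [hγH, hγ.trace_mul_mul_self, trace_mul_comm, trace_mul_eq_one_sub γ hΓtr, Complex.sub_re,
      Complex.one_re]
  have hX₀ := (Complex.nonneg_iff.mp (hΓ.mul_mul_conjTranspose_same A).trace_nonneg).1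
  have hXle : (A * Γ * Aᴴ).trace.re ≤ ‖L‖ ^ 2 * ((1 - γ) * Γ).trace.re :=
    hX ▸ (Complex.re_le_norm _).trans (hγ.norm_trace_conj_mul_compl_conj_le hΓ hL)
  have h₁ := hΓ.sq_norm_trace_mul_conjTranspose_le A γ
  have h₂ := hΓ.sq_norm_trace_mul_conjTranspose_le γ A
  simp only [RCLike.re_to_complex, hp] at h₁ h₂
  generalize (A * Γ * Aᴴ).trace.re = X at h₁ h₂ hX₀ hXle
  rw [hAH] at h₁
  rw [hγH] at h₂
  constructor <;> nlinarith [mul_nonneg hX₀ hε₀]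

end IsStarProjection

theorem norm_expansion_le {X r r' c d ℓ : ℂ} {N ε : ℝ} (hN : 0 ≤ N) (hε : 0 ≤ ε) (hε₁ : ε ≤ 1)
    (hX : ‖X‖ ≤ N ^ 2 * ε) (hr : ‖r‖ ^ 2 ≤ N ^ 2 * ε) (hr' : ‖r'‖ ^ 2 ≤ N ^ 2 * ε)
    (hc : ‖c‖ ≤ N * ε) (hd : ‖d‖ ≤ ε) (hℓ : ‖ℓ‖ ≤ N) :
    ‖-4 * X + 2 * (r + r') * (r + r' + c + d * ℓ)‖ ≤ 20 * N ^ 2 * ε := by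
  have hs : ‖r + r'‖ ^ 2 ≤ 4 * N ^ 2 * ε := by
    nlinarith [norm_add_le r r', norm_nonneg (r + r'), sq_nonneg (‖r‖ - ‖r'‖)]
  have hs' : ‖r + r'‖ ≤ 2 * N := by
    nlinarith [norm_nonneg (r + r'), mul_le_mul_of_nonneg_left hε₁ (sq_nonneg N)]
  have hdℓ : ‖d‖ * ‖ℓ‖ ≤ N * ε := by nlinarith [norm_nonneg d, norm_nonneg ℓ]
  have hsum : ‖r + r' + c + d * ℓ‖ ≤ ‖r + r'‖ + ‖c‖ + ‖d‖ * ‖ℓ‖ :=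
    (norm_add_le _ _).trans (add_le_add (norm_add_le _ _) (norm_mul_le _ _))
  calc ‖-4 * X + 2 * (r + r') * (r + r' + c + d * ℓ)‖
      ≤ 4 * ‖X‖ + 2 * ‖r + r'‖ * (‖r + r'‖ + ‖c‖ + ‖d‖ * ‖ℓ‖) := by
        refine (norm_add_le _ _).trans ?_
        rw [norm_mul, norm_mul, norm_mul, norm_neg]
        gcongr <;> norm_num
    _ ≤ 20 * N ^ 2 * ε := by
        have := mul_le_mul hs' (add_le_add hc hdℓ) (by positivity) (by positivity)
        nlinarith

theorem trace_estimate_hermitian {n : ℕ} (L γ Γ : Matrix (Fin (n + 1)) (Fin (n + 1)) ℂ)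
    (hL : Lᴴ = L)
    (hγherm : γᴴ = γ) (hγidem : γ * γ = γ) (hγtr : γ.trace = 1)
    (hΓ : Γ.PosSemidef) (hΓtr : Γ.trace = 1) :
    ‖(-4 * (L * γ * L * Γ).trace
        + 2 * (Γ * (L * γ + γ * L)).trace * ((Γ * L).trace + (γ * L).trace)
        - 4 * (Γ * γ).trace * (Γ * L).trace * (γ * L).trace)‖
      ≤ 20 * euclideanOpNorm L ^ 2 * ((1 - γ) * Γ).trace.re := by
  obtain ⟨u, v, hγ⟩ := exists_eq_vecMulVec_of_isIdempotentElem hγidem hγtr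
  rw [trace_expansion_of_eq_vecMulVec L Γ hγ hγtr]
  have hproj : IsStarProjection γ := ⟨hγidem, hγherm⟩
  have hLH : L.IsHermitian := hL
  obtain ⟨hr, hr'⟩ := hproj.sq_norm_trace_off_diagonal_le hΓ hΓtr hLH
  exact norm_expansion_le (norm_nonneg L)
    (hproj.norm_trace_mul_sub_one hΓ hΓtr ▸ norm_nonneg _)
    (hproj.re_trace_compl_mul_le_one hΓ hΓtr)
    (hproj.norm_trace_conj_mul_compl_conj_le hΓ hLH) hr hr'
    (hproj.norm_trace_mul_compl_conj_le hΓ hLH) (hproj.norm_trace_mul_sub_one hΓ hΓtr).le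
    (hproj.norm_trace_mul_le_of_trace_eq_one hγtr hLH)
end

section
/- Let L be any n×n complex matrix, let γ be a rank-one projector and Γ a density matrix on ℂⁿ. Then |−tr(γLΓL* + γL*ΓL + γL*ΓL* + γLΓL) + tr(γΓL* + γLΓ)·tr(γ(L*+L)) + tr(γΓL + γL*Γ)·tr(Γ(L*+L)) − tr(Γγ)·tr(Γ(L*+L))·tr(γ(L*+L))| ≤ 28·‖L‖²·tr((I−γ)Γ). -/
/-
Write `γ = u u*` with `‖u‖ = 1`, and put `S = L* + L`, `v = (1 - γ) Γ u`, `ε = tr ((1 - γ) Γ)`.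
Since `γ X γ = ⟨u, X u⟩ γ`, every trace against `γ` is an inner product at `u`, and the expression
collapses to `(tr (Γ S) - ⟨u, S u⟩) (⟨L u, v⟩ + ⟨v, L u⟩) - ⟨S u, (1 - γ) Γ (1 - γ) S u⟩`.
All three pieces are controlled by the positive semidefinite matrix `(1 - γ) Γ (1 - γ)`, whose
trace is `ε`: factoring `Γ = B* B` gives `‖v‖ ≤ √ε`; the last term is at most `ε ‖S‖²`; and
splitting `Γ` into its blocks along `γ` gives `|tr (Γ S) - ⟨u, S u⟩| ≤ 4 ‖S‖ √ε`.
With `‖S‖ ≤ 2 ‖L‖` the total is at most `20 ‖L‖² ε`.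
-/

open Matrix ComplexOrder

open scoped InnerProductSpace

namespace Matrix

variable {𝕜 ι : Type*} [RCLike 𝕜] [Fintype ι]

theorem PosSemidef.mul_mul_of_isSelfAdjoint {Γ P : Matrix ι ι 𝕜} (hΓ : Γ.PosSemidef)
    (hP : IsSelfAdjoint P) : (P * Γ * P).PosSemidef := by
  simpa only [← star_eq_conjTranspose, hP.star_eq] using hΓ.conjTranspose_mul_mul_same P

theorem trace_mul_mul_of_isIdempotentElem {P : Matrix ι ι 𝕜} (hP : IsIdempotentElem P)
    (Γ : Matrix ι ι 𝕜) : (P * Γ * P).trace = (P * Γ).trace := by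
  rw [trace_mul_cycle, hP.eq]

theorem PosSemidef.trace_mul_nonneg_of_isStarProjection {Γ P : Matrix ι ι 𝕜}
    (hΓ : Γ.PosSemidef) (hP : IsStarProjection P) : 0 ≤ (P * Γ).trace :=
  trace_mul_mul_of_isIdempotentElem hP.isIdempotentElem Γ ▸
    (hΓ.mul_mul_of_isSelfAdjoint hP.isSelfAdjoint).trace_nonneg

variable [DecidableEq ι]

theorem IsStarProjection.re_trace_one_sub_mul_le_one {Γ P : Matrix ι ι 𝕜}
    (hP : IsStarProjection P) (hΓ : Γ.PosSemidef) (hΓtr : Γ.trace = 1) :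
    RCLike.re ((1 - P) * Γ).trace ≤ 1 := by
  have h := (RCLike.nonneg_iff.mp (hΓ.trace_mul_nonneg_of_isStarProjection hP)).1
  rw [sub_mul, one_mul, trace_sub, hΓtr, map_sub, RCLike.one_re]
  linarith

local notation "T" => toEuclideanCLM (n := ι) (𝕜 := 𝕜)

theorem inner_toEuclideanCLM_left (A : Matrix ι ι 𝕜) (x y : EuclideanSpace 𝕜 ι) :
    ⟪T A x, y⟫_𝕜 = ⟪x, T Aᴴ y⟫_𝕜 := by
  rw [← star_eq_conjTranspose, map_star, ContinuousLinearMap.star_eq_adjoint,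
    ContinuousLinearMap.adjoint_inner_right]

theorem norm_toEuclideanCLM_conjTranspose (A : Matrix ι ι 𝕜) : ‖T Aᴴ‖ = ‖T A‖ := by
  rw [← star_eq_conjTranspose, map_star, ContinuousLinearMap.star_eq_adjoint]
  exact ContinuousLinearMap.adjoint.norm_map _

theorem trace_vecMulVec_star_mul (u : EuclideanSpace 𝕜 ι) (X : Matrix ι ι 𝕜) :
    (vecMulVec u (star u) * X).trace = ⟪u, T X u⟫_𝕜 := by
  rw [vecMulVec_mul, trace_vecMulVec, EuclideanSpace.inner_eq_star_dotProduct,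
    ofLp_toEuclideanCLM, dotProduct_comm, ← dotProduct_mulVec, dotProduct_comm]

theorem trace_vecMulVec_star (u : EuclideanSpace 𝕜 ι) :
    (vecMulVec u (star u)).trace = (‖u‖ ^ 2 : 𝕜) := by
  simpa [inner_self_eq_norm_sq_to_K] using trace_vecMulVec_star_mul u 1

theorem toEuclideanCLM_vecMulVec_star_apply (u x : EuclideanSpace 𝕜 ι) :
    T (vecMulVec u (star u)) x = ⟪u, x⟫_𝕜 • u := by
  ext i
  simp [vecMulVec_mulVec, EuclideanSpace.inner_eq_star_dotProduct, mul_comm, dotProduct_comm]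

theorem norm_toEuclideanCLM_vecMulVec_star_le (u : EuclideanSpace 𝕜 ι) :
    ‖T (vecMulVec u (star u))‖ ≤ ‖u‖ ^ 2 :=
  ContinuousLinearMap.opNorm_le_bound _ (by positivity) fun x => by
    rw [toEuclideanCLM_vecMulVec_star_apply, norm_smul]
    calc ‖⟪u, x⟫_𝕜‖ * ‖u‖ ≤ ‖u‖ * ‖x‖ * ‖u‖ := by gcongr; exact norm_inner_le_norm u x
      _ = ‖u‖ ^ 2 * ‖x‖ := by ring

theorem isStarProjection_vecMulVec_star {u : EuclideanSpace 𝕜 ι} (hu : ‖u‖ = 1) :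
    IsStarProjection (vecMulVec u (star u)) := by
  refine ⟨?_, by rw [IsSelfAdjoint, star_eq_conjTranspose, conjTranspose_vecMulVec, star_star]⟩
  have h := trace_vecMulVec_star u
  rw [trace_vecMulVec, hu, dotProduct_comm] at h
  rw [IsIdempotentElem, vecMulVec_mul_vecMulVec, h]
  simp

theorem IsStarProjection.eq_vecMulVec_star_of_apply_eq {γ : Matrix ι ι 𝕜}
    (hγ : IsStarProjection γ) (htr : γ.trace = 1) {u : EuclideanSpace 𝕜 ι} (hu : ‖u‖ = 1)
    (hγu : T γ u = u) : γ = vecMulVec u (star u) := by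
  set π : Matrix ι ι 𝕜 := vecMulVec u (star u)
  have hπ := isStarProjection_vecMulVec_star hu
  have hγherm : γᴴ = γ := hγ.isSelfAdjoint.star_eq
  have hγu' : γ *ᵥ u = u := congrArg WithLp.ofLp hγu
  have hγπ : γ * π = π := by rw [mul_vecMulVec, hγu']
  have hπγ : π * γ = π := by rw [vecMulVec_mul, ← hγherm, ← star_mulVec, hγu']
  have hπtr : π.trace = 1 := by rw [trace_vecMulVec_star, hu]; simp
  -- `γ - π` is a projection of trace zero.
  have hδ : ((γ - π)ᴴ * (γ - π)).trace = 0 := by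
    rw [conjTranspose_sub, hγherm, ← star_eq_conjTranspose, hπ.isSelfAdjoint.star_eq, sub_mul,
      mul_sub, mul_sub, hγ.isIdempotentElem.eq, hγπ, hπγ, hπ.isIdempotentElem.eq, sub_self,
      sub_zero, trace_sub, htr, hπtr, sub_self]
  exact sub_eq_zero.mp (trace_conjTranspose_mul_self_eq_zero_iff.mp hδ)

theorem IsStarProjection.exists_eq_vecMulVec_star_of_trace_eq_one {γ : Matrix ι ι 𝕜}
    (hγ : IsStarProjection γ) (htr : γ.trace = 1) :
    ∃ u : EuclideanSpace 𝕜 ι, ‖u‖ = 1 ∧ γ = vecMulVec u (star u) := by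
  obtain ⟨x, hx⟩ : ∃ x, T γ x ≠ 0 := by
    by_contra! h
    have hγ0 : γ = 0 :=
      (EmbeddingLike.map_eq_zero_iff (f := toEuclideanCLM (𝕜 := 𝕜))).mp (ContinuousLinearMap.ext h)
    simp [hγ0] at htr
  have hγx : T γ (T γ x) = T γ x := by rw [← mul_apply_eq_comp, ← map_mul, hγ.isIdempotentElem.eq]
  have hu := norm_smul_inv_norm (𝕜 := 𝕜) hx
  refine ⟨_, hu, hγ.eq_vecMulVec_star_of_apply_eq htr hu ?_⟩
  rw [map_smul, hγx]

theorem PosSemidef.norm_trace_mul_le {A : Matrix ι ι 𝕜} (hA : A.PosSemidef) (X : Matrix ι ι 𝕜) :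
    ‖(A * X).trace‖ ≤ ‖T X‖ * RCLike.re A.trace := by
  obtain ⟨m, v, rfl⟩ := posSemidef_iff_eq_sum_vecMulVec.mp hA
  have hrankOne (w : EuclideanSpace 𝕜 ι) :
      ‖(vecMulVec w (star w) * X).trace‖ ≤ ‖T X‖ * RCLike.re (vecMulVec w (star w)).trace := by
    rw [trace_vecMulVec_star_mul, trace_vecMulVec_star, ← RCLike.ofReal_pow, RCLike.ofReal_re]
    calc _ ≤ ‖w‖ * ‖T X w‖ := norm_inner_le_norm _ _
      _ ≤ ‖w‖ * (‖T X‖ * ‖w‖) := by gcongr; exact (T X).le_opNorm w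
      _ = _ := by ring
  rw [Finset.sum_mul, trace_sum, trace_sum, map_sum, Finset.mul_sum]
  exact (norm_sum_le _ _).trans (Finset.sum_le_sum fun k _ => hrankOne (WithLp.toLp 2 (v k)))

theorem PosSemidef.norm_inner_toEuclideanCLM_le {A : Matrix ι ι 𝕜} (hA : A.PosSemidef)
    (x : EuclideanSpace 𝕜 ι) : ‖⟪x, T A x⟫_𝕜‖ ≤ ‖x‖ ^ 2 * RCLike.re A.trace := by
  rw [← trace_vecMulVec_star_mul, trace_mul_comm]
  refine (hA.norm_trace_mul_le _).trans ?_
  gcongr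
  · exact (RCLike.nonneg_iff.mp hA.trace_nonneg).1
  · exact norm_toEuclideanCLM_vecMulVec_star_le x

theorem norm_toEuclideanCLM_apply_sq_le (C : Matrix ι ι 𝕜) (x : EuclideanSpace 𝕜 ι) :
    ‖T C x‖ ^ 2 ≤ ‖x‖ ^ 2 * RCLike.re (C * Cᴴ).trace := by
  rw [← inner_self_eq_norm_sq (𝕜 := 𝕜), inner_toEuclideanCLM_left, ← mul_apply_eq_comp,
    ← map_mul, ← trace_mul_comm]
  exact (RCLike.re_le_norm _).trans
    ((posSemidef_conjTranspose_mul_self C).norm_inner_toEuclideanCLM_le x)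

theorem PosSemidef.norm_toEuclideanCLM_mul_apply_sq_le {Γ : Matrix ι ι 𝕜} (hΓ : Γ.PosSemidef)
    (Q : Matrix ι ι 𝕜) (u : EuclideanSpace 𝕜 ι) :
    ‖T (Q * Γ) u‖ ^ 2 ≤ ‖u‖ ^ 2 * RCLike.re Γ.trace * RCLike.re (Q * Γ * Qᴴ).trace := by
  obtain ⟨B, rfl⟩ : ∃ B : Matrix ι ι 𝕜, Γ = Bᴴ * B := by
    open scoped MatrixOrder Matrix.Norms.L2Operator in
    exact CStarAlgebra.nonneg_iff_eq_star_mul_self.mp hΓ.nonneg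
  have hQB : (Q * Bᴴ) * (Q * Bᴴ)ᴴ = Q * Bᴴ * B * Qᴴ := by
    simp only [conjTranspose_mul, conjTranspose_conjTranspose, Matrix.mul_assoc]
  rw [← Matrix.mul_assoc, map_mul, mul_apply_eq_comp, ← hQB, trace_mul_comm Bᴴ]
  calc _ ≤ ‖T B u‖ ^ 2 * RCLike.re ((Q * Bᴴ) * (Q * Bᴴ)ᴴ).trace :=
        norm_toEuclideanCLM_apply_sq_le _ _
    _ ≤ _ := by
        gcongr
        · exact (RCLike.nonneg_iff.mp (posSemidef_self_mul_conjTranspose _).trace_nonneg).1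
        · exact norm_toEuclideanCLM_apply_sq_le B u

theorem IsStarProjection.norm_toEuclideanCLM_mul_apply_le {Γ P : Matrix ι ι 𝕜}
    (hP : IsStarProjection P) (hΓ : Γ.PosSemidef) (hΓtr : Γ.trace = 1) (u : EuclideanSpace 𝕜 ι) :
    ‖T (P * Γ) u‖ ≤ ‖u‖ * √(RCLike.re (P * Γ).trace) := by
  have h := hΓ.norm_toEuclideanCLM_mul_apply_sq_le P u
  rw [← star_eq_conjTranspose, hP.isSelfAdjoint.star_eq,
    trace_mul_mul_of_isIdempotentElem hP.isIdempotentElem, hΓtr, RCLike.one_re, mul_one] at h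
  rw [← Real.sqrt_sq (norm_nonneg (T (P * Γ) u)), ← Real.sqrt_sq (norm_nonneg u),
    ← Real.sqrt_mul (sq_nonneg _)]
  exact Real.sqrt_le_sqrt h

end Matrix

section

variable {𝕜 ι : Type*} [RCLike 𝕜] [Fintype ι] [DecidableEq ι]

local notation "T" => toEuclideanCLM (n := ι) (𝕜 := 𝕜)

noncomputable def traceRemainder (L γ Γ : Matrix ι ι 𝕜) : 𝕜 :=
  -(γ * L * Γ * Lᴴ + γ * Lᴴ * Γ * L + γ * Lᴴ * Γ * Lᴴ + γ * L * Γ * L).trace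
    + (γ * Γ * Lᴴ + γ * L * Γ).trace * (γ * (Lᴴ + L)).trace
    + (γ * Γ * L + γ * Lᴴ * Γ).trace * (Γ * (Lᴴ + L)).trace
    - (Γ * γ).trace * (Γ * (Lᴴ + L)).trace * (γ * (Lᴴ + L)).trace

theorem traceRemainder_eq {u : EuclideanSpace 𝕜 ι} {γ Γ : Matrix ι ι 𝕜}
    (hγ : γ = vecMulVec u (star u)) (hΓ : Γᴴ = Γ) (L : Matrix ι ι 𝕜) :
    traceRemainder L γ Γ
      = ((Γ * (Lᴴ + L)).trace - ⟪u, T (Lᴴ + L) u⟫_𝕜)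
          * (⟪T L u, T ((1 - γ) * Γ) u⟫_𝕜 + ⟪T ((1 - γ) * Γ) u, T L u⟫_𝕜)
        - ⟪T (Lᴴ + L) u, T ((1 - γ) * Γ * (1 - γ)) (T (Lᴴ + L) u)⟫_𝕜 := by
  subst hγ
  rw [traceRemainder, trace_mul_comm Γ (vecMulVec _ _)]
  simp only [trace_add, Matrix.mul_assoc, trace_vecMulVec_star_mul, map_add, map_sub, map_one,
    map_mul, map_smul, mul_apply_eq_comp, _root_.add_apply, _root_.sub_apply, one_apply_eq_self,
    toEuclideanCLM_vecMulVec_star_apply, inner_add_left, inner_add_right, inner_sub_left,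
    inner_sub_right, inner_smul_left, inner_smul_right, inner_conj_symm, inner_toEuclideanCLM_left,
    conjTranspose_conjTranspose, hΓ]
  ring

theorem trace_mul_sub_inner_eq {u : EuclideanSpace 𝕜 ι} {γ Γ : Matrix ι ι 𝕜}
    (hγ : γ = vecMulVec u (star u)) (hΓ : Γᴴ = Γ) (hΓtr : Γ.trace = 1) (X : Matrix ι ι 𝕜) :
    (Γ * X).trace - ⟪u, T X u⟫_𝕜
      = ⟪T ((1 - γ) * Γ) u, T X u⟫_𝕜 + ⟪T Xᴴ u, T ((1 - γ) * Γ) u⟫_𝕜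
        - ((1 - γ) * Γ).trace * ⟪u, T X u⟫_𝕜 + ((1 - γ) * Γ * (1 - γ) * X).trace := by
  have hsplit : Γ * X = (γ * Γ + Γ * γ - γ * Γ * γ + (1 - γ) * Γ * (1 - γ)) * X := by
    congr 1; noncomm_ring
  rw [hsplit, add_mul, trace_add]
  generalize ((1 - γ) * Γ * (1 - γ) * X).trace = t
  simp only [add_mul, sub_mul, trace_add, trace_sub, Matrix.mul_assoc]
  rw [trace_mul_comm Γ (γ * X), Matrix.mul_assoc]
  subst hγ
  simp only [one_mul, hΓtr, trace_vecMulVec_star_mul, map_sub, map_mul, map_smul,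
    mul_apply_eq_comp, _root_.sub_apply, toEuclideanCLM_vecMulVec_star_apply, inner_sub_left,
    inner_sub_right, inner_smul_left, inner_smul_right, inner_conj_symm, inner_toEuclideanCLM_left,
    conjTranspose_conjTranspose, hΓ]
  ring

theorem norm_trace_mul_sub_inner_le {u : EuclideanSpace 𝕜 ι} {γ Γ : Matrix ι ι 𝕜}
    (hγ : γ = vecMulVec u (star u)) (hu : ‖u‖ = 1) (hΓ : Γ.PosSemidef) (hΓtr : Γ.trace = 1)
    (X : Matrix ι ι 𝕜) :
    ‖(Γ * X).trace - ⟪u, T X u⟫_𝕜‖ ≤ 4 * ‖T X‖ * √(RCLike.re ((1 - γ) * Γ).trace) := by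
  have hP : IsStarProjection γ := hγ ▸ isStarProjection_vecMulVec_star hu
  set ε := RCLike.re ((1 - γ) * Γ).trace
  have hnorm_tr : ‖((1 - γ) * Γ).trace‖ = ε := by
    simpa using congrArg RCLike.re
      (RCLike.norm_of_nonneg' (hΓ.trace_mul_nonneg_of_isStarProjection hP.one_sub))
  have hε0 : 0 ≤ ε := hnorm_tr ▸ norm_nonneg _
  have hε : ε ≤ √ε := Real.le_sqrt_self_iff.mpr (hP.re_trace_one_sub_mul_le_one hΓ hΓtr)
  have hv : ‖T ((1 - γ) * Γ) u‖ ≤ √ε := by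
    simpa [hu] using hP.one_sub.norm_toEuclideanCLM_mul_apply_le hΓ hΓtr u
  have hXu : ‖T X u‖ ≤ ‖T X‖ := by simpa [hu] using (T X).le_opNorm u
  have hXHu : ‖T Xᴴ u‖ ≤ ‖T X‖ := by
    simpa [hu, norm_toEuclideanCLM_conjTranspose] using (T Xᴴ).le_opNorm u
  have hblock : ‖((1 - γ) * Γ * (1 - γ) * X).trace‖ ≤ ‖T X‖ * ε := by
    have h := (hΓ.mul_mul_of_isSelfAdjoint hP.one_sub.isSelfAdjoint).norm_trace_mul_le X
    rwa [trace_mul_mul_of_isIdempotentElem hP.one_sub.isIdempotentElem] at h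
  rw [trace_mul_sub_inner_eq hγ hΓ.1 hΓtr]
  grw [norm_add_le, norm_sub_le, norm_add_le, norm_mul, hnorm_tr, norm_inner_le_norm,
    norm_inner_le_norm, norm_inner_le_norm, hblock, hv, hXu, hXHu, hu]
  nlinarith [mul_le_mul_of_nonneg_left hε (norm_nonneg (T X))]

theorem norm_traceRemainder_le {u : EuclideanSpace 𝕜 ι} {γ Γ : Matrix ι ι 𝕜}
    (hγ : γ = vecMulVec u (star u)) (hu : ‖u‖ = 1) (hΓ : Γ.PosSemidef) (hΓtr : Γ.trace = 1)
    (L : Matrix ι ι 𝕜) :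
    ‖traceRemainder L γ Γ‖ ≤ 28 * ‖T L‖ ^ 2 * RCLike.re ((1 - γ) * Γ).trace := by
  have hP : IsStarProjection γ := hγ ▸ isStarProjection_vecMulVec_star hu
  set ε := RCLike.re ((1 - γ) * Γ).trace
  set M := ‖T L‖
  have hε0 : 0 ≤ ε := (RCLike.nonneg_iff.mp (hΓ.trace_mul_nonneg_of_isStarProjection hP.one_sub)).1
  have hv : ‖T ((1 - γ) * Γ) u‖ ≤ √ε := by
    simpa [hu] using hP.one_sub.norm_toEuclideanCLM_mul_apply_le hΓ hΓtr u
  have hLu : ‖T L u‖ ≤ M := by simpa [hu] using (T L).le_opNorm u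
  have hS : ‖T (Lᴴ + L)‖ ≤ 2 * M := by
    grw [map_add, norm_add_le, norm_toEuclideanCLM_conjTranspose]; linarith
  have hSu : ‖T (Lᴴ + L) u‖ ≤ 2 * M :=
    (T (Lᴴ + L)).le_opNorm u |>.trans (by rw [hu, mul_one]; exact hS)
  have hba := norm_trace_mul_sub_inner_le hγ hu hΓ hΓtr (Lᴴ + L)
  have hc : ‖⟪T L u, T ((1 - γ) * Γ) u⟫_𝕜 + ⟪T ((1 - γ) * Γ) u, T L u⟫_𝕜‖ ≤ 2 * M * √ε := by
    grw [norm_add_le, norm_inner_le_norm, norm_inner_le_norm, hv, hLu]; linarith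
  have hq : ‖⟪T (Lᴴ + L) u, T ((1 - γ) * Γ * (1 - γ)) (T (Lᴴ + L) u)⟫_𝕜‖ ≤ (2 * M) ^ 2 * ε := by
    have h := (hΓ.mul_mul_of_isSelfAdjoint hP.one_sub.isSelfAdjoint).norm_inner_toEuclideanCLM_le
      (T (Lᴴ + L) u)
    rw [trace_mul_mul_of_isIdempotentElem hP.one_sub.isIdempotentElem] at h
    exact h.trans (by gcongr)
  rw [traceRemainder_eq hγ hΓ.1]
  grw [norm_sub_le, norm_mul, hba, hc, hq, hS]
  nlinarith [Real.sq_sqrt hε0, norm_nonneg (T L)]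

end

theorem trace_estimate_general {n : ℕ} (L γ Γ : Matrix (Fin (n + 1)) (Fin (n + 1)) ℂ)
    (hγherm : γᴴ = γ) (hγidem : γ * γ = γ) (hγtr : γ.trace = 1)
    (hΓ : Γ.PosSemidef) (hΓtr : Γ.trace = 1) :
    ‖-(γ * L * Γ * Lᴴ + γ * Lᴴ * Γ * L + γ * Lᴴ * Γ * Lᴴ + γ * L * Γ * L).trace
        + (γ * Γ * Lᴴ + γ * L * Γ).trace * (γ * (Lᴴ + L)).trace
        + (γ * Γ * L + γ * Lᴴ * Γ).trace * (Γ * (Lᴴ + L)).trace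
        - (Γ * γ).trace * (Γ * (Lᴴ + L)).trace * (γ * (Lᴴ + L)).trace‖
      ≤ 28 * euclideanOpNorm L ^ 2 * ((1 - γ) * Γ).trace.re := by
  obtain ⟨u, hu, hγ⟩ :=
    IsStarProjection.exists_eq_vecMulVec_star_of_trace_eq_one ⟨hγidem, hγherm⟩ hγtr
  exact norm_traceRemainder_le hγ hu hΓ hΓtr L
end

section
/- Let L be any n×n complex matrix, let Γ be a density matrix on ℂⁿ, let γ be the orthogonal projection onto the first basis vector, and set α = tr((I−γ)Γ). Then |Σ_{j≠1} (Γ_{1j}·L_{j1} + L_{1j}·Γ_{j1})| ≤ 2‖L‖√α, and likewise |Σ_{j≠1} (Γ_{1j}·L_{j1} − L_{1j}·Γ_{j1})| ≤ 2‖L‖√α. -/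
/-!
Let `v` be the first column of `Γ` with its diagonal entry removed. The two partial sums are
`(L v)₀` and the conjugate of `(Lᴴ v)₀` (as `Γ` is Hermitian), so each is at most `‖L‖ ‖v‖` in
modulus. The `2 × 2` principal minors of `Γ` give `|Γⱼ₀|² ≤ Γⱼⱼ Γ₀₀`, hence
`‖v‖² ≤ Γ₀₀ ∑_{j ≠ 0} Γⱼⱼ = (1 - α) α ≤ α`.
-/

open Matrix ComplexOrder Finset

namespace Matrix

variable {m 𝕜 : Type*} [RCLike 𝕜]

/-- The `2 × 2` principal minor on the indices `i, j` is nonnegative. -/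
theorem PosSemidef.norm_apply_sq_le {A : Matrix m m 𝕜} (hA : A.PosSemidef) (i j : m) :
    ‖A i j‖ ^ 2 ≤ RCLike.re (A i i) * RCLike.re (A j j) := by
  classical
  have hminor := (hA.submatrix ![i, j]).det_nonneg
  rw [det_fin_two, RCLike.nonneg_iff] at hminor
  have him (k : m) : RCLike.im (A k k) = 0 := RCLike.conj_eq_iff_im.mp (hA.isHermitian.apply k k)
  simpa [(hA.isHermitian.apply j i).symm, RCLike.mul_conj, him] using hminor.1

variable [Fintype m] [DecidableEq m]

theorem norm_mulVec_apply_le (L : Matrix m m 𝕜) (w : m → 𝕜) (i : m) :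
    ‖(L *ᵥ w) i‖ ≤ ‖toEuclideanCLM (𝕜 := 𝕜) L‖ * ‖WithLp.toLp 2 w‖ :=
  calc ‖(L *ᵥ w) i‖ ≤ ‖toEuclideanCLM (𝕜 := 𝕜) L (WithLp.toLp 2 w)‖ :=
        PiLp.norm_apply_le (WithLp.toLp 2 (L *ᵥ w)) i
    _ ≤ _ := (toEuclideanCLM (𝕜 := 𝕜) L).le_opNorm _

theorem norm_toEuclideanCLM_conjTranspose_s4 (L : Matrix m m 𝕜) :
    ‖toEuclideanCLM (𝕜 := 𝕜) Lᴴ‖ = ‖toEuclideanCLM (𝕜 := 𝕜) L‖ := by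
  rw [← star_eq_conjTranspose, map_star, ContinuousLinearMap.star_eq_adjoint,
    ContinuousLinearMap.adjoint.norm_map]

def offDiagCol (Γ : Matrix m m 𝕜) (i : m) : m → 𝕜 := fun j => if j = i then 0 else Γ j i

theorem mulVec_offDiagCol_apply (L Γ : Matrix m m 𝕜) (i : m) :
    (L *ᵥ offDiagCol Γ i) i = ∑ j ∈ univ.filter (fun j => j ≠ i), L i j * Γ j i := by
  rw [sum_filter]
  refine sum_congr rfl fun j _ => ?_
  by_cases hj : j = i <;> simp [offDiagCol, hj]

theorem IsHermitian.star_conjTranspose_mulVec_offDiagCol_apply {Γ : Matrix m m 𝕜}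
    (hΓ : Γ.IsHermitian) (L : Matrix m m 𝕜) (i : m) :
    star ((Lᴴ *ᵥ offDiagCol Γ i) i) = ∑ j ∈ univ.filter (fun j => j ≠ i), Γ i j * L j i := by
  rw [mulVec_offDiagCol_apply, star_sum]
  refine sum_congr rfl fun j _ => ?_
  rw [star_mul', conjTranspose_apply, star_star, hΓ.apply i j, mul_comm]

theorem PosSemidef.norm_offDiagCol_sq_le {Γ : Matrix m m 𝕜} (hΓ : Γ.PosSemidef) (i : m) :
    ‖WithLp.toLp 2 (offDiagCol Γ i)‖ ^ 2
      ≤ RCLike.re (Γ i i) * (RCLike.re Γ.trace - RCLike.re (Γ i i)) := by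
  simp only [EuclideanSpace.norm_sq_eq, trace, diag_apply, map_sum]
  rw [← sum_erase_eq_sub (f := fun j => RCLike.re (Γ j j)) (mem_univ i), mul_sum, ← filter_ne',
    sum_filter]
  refine sum_le_sum fun j _ => ?_
  by_cases hj : j = i
  · simp [offDiagCol, hj]
  · simpa [offDiagCol, hj, mul_comm] using hΓ.norm_apply_sq_le j i

end Matrix

theorem offdiag_cross_sum_bound {n : ℕ} (L Γ : Matrix (Fin (n + 1)) (Fin (n + 1)) ℂ)
    (hΓ : Γ.PosSemidef) (hΓtr : Γ.trace = 1)
    (α : ℝ)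
    (hα : α = ((1 - Matrix.single (0 : Fin (n + 1)) 0 (1 : ℂ)) * Γ).trace.re) :
    ‖∑ j ∈ Finset.univ.filter (fun j : Fin (n + 1) => j ≠ 0),
        (Γ 0 j * L j 0 + L 0 j * Γ j 0)‖ ≤ 2 * euclideanOpNorm L * Real.sqrt α ∧
    ‖∑ j ∈ Finset.univ.filter (fun j : Fin (n + 1) => j ≠ 0),
        (Γ 0 j * L j 0 - L 0 j * Γ j 0)‖ ≤ 2 * euclideanOpNorm L * Real.sqrt α := by
  have hα' : α = 1 - (Γ 0 0).re := by
    rw [hα, sub_mul, one_mul, trace_sub, trace_single_mul, one_smul, hΓtr, Complex.sub_re,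
      Complex.one_re]
  have hv : ‖WithLp.toLp 2 (offDiagCol Γ 0)‖ ≤ √α := by
    refine (le_abs_self _).trans (Real.abs_le_sqrt ?_)
    have := hΓ.norm_offDiagCol_sq_le 0
    rw [hΓtr] at this
    simp only [RCLike.re_to_complex, Complex.one_re] at this
    -- `Γ₀₀ α = (1 - α) α ≤ α`
    nlinarith [sq_nonneg α]
  have hLv : ‖∑ j ∈ univ.filter (fun j => j ≠ 0), L 0 j * Γ j 0‖ ≤ euclideanOpNorm L * √α := by
    rw [← mulVec_offDiagCol_apply]
    exact (norm_mulVec_apply_le L _ 0).trans (mul_le_mul_of_nonneg_left hv (norm_nonneg _))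
  have hLΓ : ‖∑ j ∈ univ.filter (fun j => j ≠ 0), Γ 0 j * L j 0‖ ≤ euclideanOpNorm L * √α := by
    rw [← hΓ.isHermitian.star_conjTranspose_mulVec_offDiagCol_apply, norm_star]
    refine (norm_mulVec_apply_le Lᴴ _ 0).trans ?_
    rw [norm_toEuclideanCLM_conjTranspose_s4]
    exact mul_le_mul_of_nonneg_left hv (norm_nonneg _)
  rw [sum_add_distrib, sum_sub_distrib, two_mul, add_mul]
  exact ⟨norm_add_le_of_le hLΓ hLv, norm_sub_le_of_le hLΓ hLv⟩
end

section
/- Let L be a Hermitian n×n complex matrix, let Γ be a density matrix on ℂⁿ, let γ be the orthogonal projection onto the first basis vector, and set α = tr((I−γ)Γ). Then |tr(ΓL) − tr(γL)| ≤ 4‖L‖√α. -/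
open Matrix ComplexOrder

/-!
Write the density matrix as an ensemble `Γ = ∑ₖ vₖ vₖᴴ` and let `wₖ` be the component of `vₖ`
along the first basis vector. Then `tr(ΓL) - Γ₀₀ L₀₀ = ∑ₖ (⟪vₖ, L vₖ⟫ - ⟪wₖ, L wₖ⟫)`, each summand
is at most `2‖L‖ ‖vₖ‖ ‖vₖ - wₖ‖`, and Cauchy–Schwarz with `∑ₖ ‖vₖ‖² = tr Γ = 1` and
`∑ₖ ‖vₖ - wₖ‖² = tr Γ - Γ₀₀ = α` bounds the sum by `2‖L‖√α`. What is left,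
`(Γ₀₀ - 1) L₀₀ = -α L₀₀`, is at most `α‖L‖ ≤ √α‖L‖`.
-/

open scoped InnerProductSpace

namespace ContinuousLinearMap

variable {𝕜 E : Type*} [RCLike 𝕜] [NormedAddCommGroup E] [InnerProductSpace 𝕜 E]

theorem norm_inner_map_self_sub_le (T : E →L[𝕜] E) (v w : E) :
    ‖⟪v, T v⟫_𝕜 - ⟪w, T w⟫_𝕜‖ ≤ ‖T‖ * ‖v - w‖ * (‖v‖ + ‖w‖) := by
  have hsplit : ⟪v, T v⟫_𝕜 - ⟪w, T w⟫_𝕜 = ⟪v - w, T v⟫_𝕜 + ⟪w, T (v - w)⟫_𝕜 := by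
    rw [inner_sub_left, map_sub, inner_sub_right]; ring
  calc ‖⟪v, T v⟫_𝕜 - ⟪w, T w⟫_𝕜‖
      ≤ ‖v - w‖ * ‖T v‖ + ‖w‖ * ‖T (v - w)‖ := by
        rw [hsplit]; exact norm_add_le_of_le (norm_inner_le_norm _ _) (norm_inner_le_norm _ _)
    _ ≤ ‖v - w‖ * (‖T‖ * ‖v‖) + ‖w‖ * (‖T‖ * ‖v - w‖) := by
        gcongr <;> exact T.le_opNorm _
    _ = ‖T‖ * ‖v - w‖ * (‖v‖ + ‖w‖) := by ring

theorem norm_sum_inner_map_self_sub_le {κ : Type*} (s : Finset κ) (T : E →L[𝕜] E)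
    {v w : κ → E} (hw : ∀ k ∈ s, ‖w k‖ ≤ ‖v k‖) :
    ‖∑ k ∈ s, (⟪v k, T (v k)⟫_𝕜 - ⟪w k, T (w k)⟫_𝕜)‖
      ≤ 2 * ‖T‖ * √(∑ k ∈ s, ‖v k - w k‖ ^ 2) * √(∑ k ∈ s, ‖v k‖ ^ 2) := by
  calc ‖∑ k ∈ s, (⟪v k, T (v k)⟫_𝕜 - ⟪w k, T (w k)⟫_𝕜)‖
      ≤ ∑ k ∈ s, 2 * ‖T‖ * (‖v k - w k‖ * ‖v k‖) := by
        refine norm_sum_le_of_le s fun k hk => ?_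
        calc _ ≤ ‖T‖ * ‖v k - w k‖ * (‖v k‖ + ‖w k‖) := T.norm_inner_map_self_sub_le (v k) (w k)
          _ ≤ ‖T‖ * ‖v k - w k‖ * (‖v k‖ + ‖v k‖) := by gcongr; exact hw k hk
          _ = 2 * ‖T‖ * (‖v k - w k‖ * ‖v k‖) := by ring
    _ = 2 * ‖T‖ * ∑ k ∈ s, ‖v k - w k‖ * ‖v k‖ := by rw [Finset.mul_sum]
    _ ≤ 2 * ‖T‖ * (√(∑ k ∈ s, ‖v k - w k‖ ^ 2) * √(∑ k ∈ s, ‖v k‖ ^ 2)) := by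
        gcongr; exact Real.sum_mul_le_sqrt_mul_sqrt s _ _
    _ = 2 * ‖T‖ * √(∑ k ∈ s, ‖v k - w k‖ ^ 2) * √(∑ k ∈ s, ‖v k‖ ^ 2) := by ring

end ContinuousLinearMap

section Matrix

variable {𝕜 ι : Type*} [RCLike 𝕜] [Fintype ι]

theorem Matrix.PosSemidef.diag_le_trace {A : Matrix ι ι 𝕜} (hA : A.PosSemidef) (i : ι) :
    A i i ≤ A.trace :=
  Finset.single_le_sum (f := fun j => A j j) (fun _ _ => hA.diag_nonneg) (Finset.mem_univ i)

variable [DecidableEq ι]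

theorem Matrix.trace_vecMulVec_star_mul_s9 (v : ι → 𝕜) (M : Matrix ι ι 𝕜) :
    (vecMulVec v (star v) * M).trace
      = ⟪WithLp.toLp 2 v, toEuclideanCLM (𝕜 := 𝕜) M (WithLp.toLp 2 v)⟫_𝕜 := by
  rw [vecMulVec_mul, trace_vecMulVec, toEuclideanCLM_toLp, EuclideanSpace.inner_toLp_toLp,
    dotProduct_comm, ← dotProduct_mulVec, dotProduct_comm]

theorem EuclideanSpace.inner_single_toEuclideanCLM_single (M : Matrix ι ι 𝕜) (i : ι) (a : 𝕜) :
    ⟪single i a, toEuclideanCLM (𝕜 := 𝕜) M (single i a)⟫_𝕜 = (‖a‖ ^ 2 : 𝕜) * M i i := by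
  rw [← RCLike.conj_mul, EuclideanSpace.inner_single_left, ofLp_toEuclideanCLM]
  simp [mulVec_single]
  ring

theorem EuclideanSpace.norm_sub_single_apply_sq (x : EuclideanSpace 𝕜 ι) (i : ι) :
    ‖x - single i (x i)‖ ^ 2 = ‖x‖ ^ 2 - ‖x i‖ ^ 2 := by
  rw [EuclideanSpace.norm_sq_eq, EuclideanSpace.norm_sq_eq,
    ← Finset.add_sum_erase _ _ (Finset.mem_univ i), ← Finset.add_sum_erase _ _ (Finset.mem_univ i)]
  simp only [PiLp.sub_apply, PiLp.single_apply]
  rw [Finset.sum_congr rfl fun j hj => by rw [if_neg (Finset.ne_of_mem_erase hj), sub_zero]]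
  simp

theorem Matrix.norm_apply_self_le_norm_toEuclideanCLM (M : Matrix ι ι 𝕜) (i : ι) :
    ‖M i i‖ ≤ ‖toEuclideanCLM (𝕜 := 𝕜) M‖ := by
  set e : EuclideanSpace 𝕜 ι := EuclideanSpace.single i 1
  have hdiag : ⟪e, toEuclideanCLM (𝕜 := 𝕜) M e⟫_𝕜 = M i i := by
    simpa using EuclideanSpace.inner_single_toEuclideanCLM_single M i (1 : 𝕜)
  calc ‖M i i‖ ≤ ‖e‖ * ‖toEuclideanCLM (𝕜 := 𝕜) M e‖ := hdiag ▸ norm_inner_le_norm _ _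
    _ ≤ ‖e‖ * (‖toEuclideanCLM (𝕜 := 𝕜) M‖ * ‖e‖) := by
        gcongr; exact ContinuousLinearMap.le_opNorm _ _
    _ = ‖toEuclideanCLM (𝕜 := 𝕜) M‖ := by simp [e]

theorem Matrix.PosSemidef.norm_trace_mul_sub_diag_mul_diag_le {Γ : Matrix ι ι 𝕜}
    (hΓ : Γ.PosSemidef) (L : Matrix ι ι 𝕜) (i : ι) :
    ‖(Γ * L).trace - Γ i i * L i i‖
      ≤ 2 * ‖toEuclideanCLM (𝕜 := 𝕜) L‖ * √(RCLike.re (Γ.trace - Γ i i)) *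
          √(RCLike.re Γ.trace) := by
  obtain ⟨m, v, rfl⟩ := posSemidef_iff_eq_sum_vecMulVec.mp hΓ
  set x : Fin m → EuclideanSpace 𝕜 ι := fun k => WithLp.toLp 2 (v k)
  set y : Fin m → EuclideanSpace 𝕜 ι := fun k => EuclideanSpace.single i (x k i)
  have htrace_mul (M : Matrix ι ι 𝕜) :
      ((∑ k, vecMulVec (v k) (star (v k))) * M).trace
        = ∑ k, ⟪x k, toEuclideanCLM (𝕜 := 𝕜) M (x k)⟫_𝕜 := by
    simp_rw [Finset.sum_mul, trace_sum, trace_vecMulVec_star_mul_s9]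
    rfl
  have htrace : (∑ k, vecMulVec (v k) (star (v k))).trace = ((∑ k, ‖x k‖ ^ 2 : ℝ) : 𝕜) := by
    simpa [inner_self_eq_norm_sq_to_K] using htrace_mul 1
  have hdiag : (∑ k, vecMulVec (v k) (star (v k))) i i = ((∑ k, ‖x k i‖ ^ 2 : ℝ) : 𝕜) := by
    simp [Matrix.sum_apply, vecMulVec_apply, RCLike.mul_conj, x]
  have hcompress : (∑ k, vecMulVec (v k) (star (v k))) i i * L i i
      = ∑ k, ⟪y k, toEuclideanCLM (𝕜 := 𝕜) L (y k)⟫_𝕜 := by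
    rw [hdiag, RCLike.ofReal_sum, Finset.sum_mul]
    simp_rw [y, EuclideanSpace.inner_single_toEuclideanCLM_single, RCLike.ofReal_pow]
  have hdefect : ∑ k, ‖x k - y k‖ ^ 2 = ∑ k, ‖x k‖ ^ 2 - ∑ k, ‖x k i‖ ^ 2 := by
    simp_rw [y, EuclideanSpace.norm_sub_single_apply_sq, Finset.sum_sub_distrib]
  have hy (k : Fin m) (_ : k ∈ Finset.univ) : ‖y k‖ ≤ ‖x k‖ := by
    simpa [y] using PiLp.norm_apply_le (x k) i
  rw [htrace_mul, hcompress, ← Finset.sum_sub_distrib, htrace, hdiag, ← RCLike.ofReal_sub,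
    RCLike.ofReal_re, RCLike.ofReal_re, ← hdefect]
  exact ContinuousLinearMap.norm_sum_inner_map_self_sub_le _ _ hy

end Matrix

theorem trace_diff_hermitian_bound_general {n : ℕ} (L Γ : Matrix (Fin (n + 1)) (Fin (n + 1)) ℂ)
    (hΓ : Γ.PosSemidef) (hΓtr : Γ.trace = 1)
    (α : ℝ)
    (hα : α = ((1 - Matrix.single (0 : Fin (n + 1)) 0 (1 : ℂ)) * Γ).trace.re) :
    ‖(Γ * L).trace - (Matrix.single (0 : Fin (n + 1)) 0 (1 : ℂ) * L).trace‖
      ≤ 4 * euclideanOpNorm L * Real.sqrt α := by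
  have hdefect : (α : ℂ) = 1 - Γ 0 0 := by
    have hdiag_real : (Γ 0 0).im = 0 := (Complex.nonneg_iff.mp hΓ.diag_nonneg).2.symm
    rw [hα, sub_mul, trace_sub, one_mul, trace_single_mul, one_smul, hΓtr]
    apply Complex.ext <;> simp [hdiag_real]
  have hα0 : 0 ≤ α := by
    rw [← Complex.zero_le_real, hdefect, sub_nonneg, ← hΓtr]; exact hΓ.diag_le_trace 0
  have hα1 : α ≤ 1 := by
    rw [← Complex.real_le_real, hdefect, Complex.ofReal_one, sub_le_self_iff]; exact hΓ.diag_nonneg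
  have hsplit : (Γ * L).trace - (Matrix.single 0 0 1 * L).trace
      = ((Γ * L).trace - Γ 0 0 * L 0 0) - α * L 0 0 := by
    rw [trace_single_mul, one_smul, hdefect]; ring
  have hcompress := hΓ.norm_trace_mul_sub_diag_mul_diag_le L 0
  rw [hΓtr, ← hdefect] at hcompress
  simp only [RCLike.re_to_complex, Complex.ofReal_re, Complex.one_re, Real.sqrt_one,
    mul_one] at hcompress
  have hL00 := L.norm_apply_self_le_norm_toEuclideanCLM 0
  rw [euclideanOpNorm]
  calc _ ≤ ‖(Γ * L).trace - Γ 0 0 * L 0 0‖ + α * ‖L 0 0‖ := by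
        rw [hsplit]
        refine (norm_sub_le _ _).trans_eq ?_
        rw [norm_mul, Complex.norm_real, Real.norm_of_nonneg hα0]
    _ ≤ 2 * ‖toEuclideanCLM (𝕜 := ℂ) L‖ * √α + √α * ‖toEuclideanCLM (𝕜 := ℂ) L‖ :=
        add_le_add hcompress <|
          mul_le_mul (Real.le_sqrt_self_iff.mpr hα1) hL00 (norm_nonneg _) (Real.sqrt_nonneg _)
    _ ≤ 4 * ‖toEuclideanCLM (𝕜 := ℂ) L‖ * √α := by
        nlinarith [norm_nonneg (toEuclideanCLM (𝕜 := ℂ) L), Real.sqrt_nonneg α]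

theorem trace_diff_hermitian_bound {n : ℕ} (L Γ : Matrix (Fin (n + 1)) (Fin (n + 1)) ℂ)
    (hL : Lᴴ = L) (hΓ : Γ.PosSemidef) (hΓtr : Γ.trace = 1)
    (α : ℝ)
    (hα : α = ((1 - Matrix.single (0 : Fin (n + 1)) 0 (1 : ℂ)) * Γ).trace.re) :
    ‖(Γ * L).trace - (Matrix.single (0 : Fin (n + 1)) 0 (1 : ℂ) * L).trace‖
      ≤ 4 * euclideanOpNorm L * Real.sqrt α :=
  trace_diff_hermitian_bound_general L Γ hΓ hΓtr α hα
end

section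
/- Let L be any n×n complex matrix with Hermitian part Lˢ = (L + L*)/2 and anti-Hermitian part Lᵃ = (L − L*)/2, let γ be a rank-one projector and Γ a density matrix on ℂⁿ. Then the identity holds: −tr(γLΓL* + γL*ΓL + γL*ΓL* + γLΓL) + tr(γΓL* + γLΓ)·tr(γ(L*+L)) + tr(γΓL + γL*Γ)·tr(Γ(L*+L)) − tr(Γγ)·tr(Γ(L*+L))·tr(γ(L*+L)) = −4·tr(LˢγLˢΓ) + 2·tr(Γ(Lˢγ + γLˢ))·(tr(ΓLˢ) + tr(γLˢ)) − 4·tr(Γγ)·tr(ΓLˢ)·tr(γLˢ) + 2·tr(γ[Γ, Lᵃ])·(tr(ΓLˢ) − tr(γLˢ)), where [Γ,Lᵃ] = ΓLᵃ − LᵃΓ. -/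
open Matrix ComplexOrder

theorem hermitian_antihermitian_decomposition_identity {n : ℕ}
    (L γ Γ : Matrix (Fin (n + 1)) (Fin (n + 1)) ℂ)
    (Ls La : Matrix (Fin (n + 1)) (Fin (n + 1)) ℂ)
    (hLs : Ls = ((1 : ℂ) / 2) • (L + Lᴴ)) (hLa : La = ((1 : ℂ) / 2) • (L - Lᴴ))
    (hγherm : γᴴ = γ) (hγidem : γ * γ = γ) (hγtr : γ.trace = 1)
    (hΓ : Γ.PosSemidef) (hΓtr : Γ.trace = 1) :
    -(γ * L * Γ * Lᴴ + γ * Lᴴ * Γ * L + γ * Lᴴ * Γ * Lᴴ + γ * L * Γ * L).trace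
      + (γ * Γ * Lᴴ + γ * L * Γ).trace * (γ * (Lᴴ + L)).trace
      + (γ * Γ * L + γ * Lᴴ * Γ).trace * (Γ * (Lᴴ + L)).trace
      - (Γ * γ).trace * (Γ * (Lᴴ + L)).trace * (γ * (Lᴴ + L)).trace
    = -4 * (Ls * γ * Ls * Γ).trace
      + 2 * (Γ * (Ls * γ + γ * Ls)).trace * ((Γ * Ls).trace + (γ * Ls).trace)
      - 4 * (Γ * γ).trace * (Γ * Ls).trace * (γ * Ls).trace
      + 2 * (γ * (Γ * La - La * Γ)).trace * ((Γ * Ls).trace - (γ * Ls).trace) := by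
  subst hLs hLa
  simp only [Matrix.smul_mul, Matrix.mul_smul, Matrix.add_mul, Matrix.mul_add,
    Matrix.sub_mul, Matrix.mul_sub, Matrix.trace_add, Matrix.trace_sub, Matrix.trace_smul,
    smul_eq_mul, smul_add, smul_sub, ← mul_assoc]
  have c4 : ∀ X Y : Matrix (Fin (n+1)) (Fin (n+1)) ℂ,
      (X * γ * Y * Γ).trace = (γ * Y * Γ * X).trace := by
    intro X Y
    simp only [mul_assoc]
    rw [Matrix.trace_mul_comm X]; simp only [mul_assoc]
  have c3a : ∀ X : Matrix (Fin (n+1)) (Fin (n+1)) ℂ,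
      (Γ * X * γ).trace = (γ * Γ * X).trace := by
    intro X; rw [Matrix.trace_mul_comm (Γ * X) γ, ← mul_assoc]
  have c3b : ∀ X : Matrix (Fin (n+1)) (Fin (n+1)) ℂ,
      (Γ * γ * X).trace = (γ * X * Γ).trace := by
    intro X; rw [mul_assoc, Matrix.trace_mul_comm Γ]
  simp only [c4, c3a, c3b]
  ring
end

section
/- Let (M, ρ) be a nonempty complete metric space and Φ : M → M a map such that for every k ≥ 1 there is a constant α_k ≥ 0 with ρ(Φᵏ(x), Φᵏ(y)) ≤ α_k · ρ(x, y) for all x, y ∈ M, and such that a := 1 + Σ_{k≥1} α_k < ∞. Then Φ has a unique fixed point x* ∈ M, and ρ(x, x*) ≤ a · ρ(x, Φ(x)) for every x ∈ M. -/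
/-- Generalized Weissinger fixed point principle. -/
theorem weissinger_fixed_point {M : Type*} [MetricSpace M] [CompleteSpace M] [Nonempty M]
    (Φ : M → M) (α : ℕ → ℝ) (hα : ∀ k, 0 ≤ α k)
    (hsum : Summable fun k : ℕ => α (k + 1))
    (hcontr : ∀ k : ℕ, 1 ≤ k → ∀ x y : M, dist (Φ^[k] x) (Φ^[k] y) ≤ α k * dist x y) :
    ∃ xs : M, Φ xs = xs ∧ (∀ y : M, Φ y = y → y = xs) ∧
      ∀ x : M, dist x xs ≤ (1 + ∑' k : ℕ, α (k + 1)) * dist x (Φ x) := by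
  -- α (k+1) → 0, so find N ≥ 1 with α N < 1
  obtain ⟨m, hm⟩ := (hsum.tendsto_atTop_zero.eventually
    (gt_mem_nhds (by norm_num : (0:ℝ) < 1))).exists
  set N := m + 1 with hNdef
  have hN1 : 1 ≤ N := Nat.succ_le_succ (Nat.zero_le _)
  have hαN : α N < 1 := hm
  have hlip : LipschitzWith (α N).toNNReal (Φ^[N]) :=
    LipschitzWith.of_dist_le_mul (fun x y => by
      simpa [Real.coe_toNNReal _ (hα N)] using hcontr N hN1 x y)
  have hc : ContractingWith (α N).toNNReal (Φ^[N]) :=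
    ⟨by simpa [← NNReal.coe_lt_coe, Real.coe_toNNReal _ (hα N)] using hαN, hlip⟩
  set xs := hc.fixedPoint (Φ^[N]) with hxsdef
  have hfixN : Φ^[N] xs = xs := hc.fixedPoint_isFixedPt
  -- uniqueness of fixed points of Φ^[N]
  have huniqN : ∀ y : M, Φ^[N] y = y → y = xs := by
    intro y hy
    by_contra hne
    have hd : 0 < dist y xs := dist_pos.mpr hne
    have := hcontr N hN1 y xs
    rw [hy, hfixN] at this
    nlinarith
  -- Φ xs is also a fixed point of Φ^[N]
  have hfix : Φ xs = xs := by
    apply huniqN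
    rw [← Function.iterate_succ_apply, Function.iterate_succ_apply', hfixN]
  have huniq : ∀ y : M, Φ y = y → y = xs := by
    intro y hy
    exact huniqN y ((Function.IsFixedPt.iterate hy N))
  refine ⟨xs, hfix, huniq, fun x => ?_⟩
  set d := dist x (Φ x) with hddef
  set S := ∑' k : ℕ, α (k + 1) with hSdef
  have hd0 : 0 ≤ d := dist_nonneg
  have hS0 : 0 ≤ S := tsum_nonneg fun k => hα _
  have hxsfix : ∀ n : ℕ, Φ^[n] xs = xs := fun n =>
    Function.IsFixedPt.iterate hfix n
  -- key inequality for each n ≥ 1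
  have key : ∀ n : ℕ, 1 ≤ n → dist x xs ≤ (1 + S) * d + α n * dist x xs := by
    intro n hn
    have h1 : dist x (Φ^[n] x) ≤ ∑ i ∈ Finset.range n, dist (Φ^[i] x) (Φ^[i+1] x) := by
      simpa using dist_le_range_sum_dist (fun i => Φ^[i] x) n
    have h2 : ∑ i ∈ Finset.range n, dist (Φ^[i] x) (Φ^[i+1] x) ≤ (1 + S) * d := by
      obtain ⟨n', rfl⟩ := Nat.exists_eq_add_of_le hn
      rw [add_comm 1 n', Finset.sum_range_succ']
      have hstep : ∀ i ∈ Finset.range n', dist (Φ^[i+1] x) (Φ^[i+1+1] x) ≤ α (i+1) * d := by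
        intro i _
        have := hcontr (i+1) (Nat.succ_le_succ (Nat.zero_le _)) x (Φ x)
        simpa [Function.iterate_succ_apply] using this
      calc (∑ i ∈ Finset.range n', dist (Φ^[i+1] x) (Φ^[i+1+1] x)) + dist (Φ^[0] x) (Φ^[0+1] x)
          ≤ (∑ i ∈ Finset.range n', α (i+1) * d) + d := by
            gcongr with i hi
            · exact hstep i hi
            · simp [hddef]
        _ = (∑ i ∈ Finset.range n', α (i+1)) * d + d := by rw [Finset.sum_mul]
        _ ≤ S * d + d := by
            gcongr
            exact Summable.sum_le_tsum _ (fun i _ => hα _) hsum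
        _ = (1 + S) * d := by ring
    have h3 : dist (Φ^[n] x) xs ≤ α n * dist x xs := by
      have := hcontr n hn x xs
      rwa [hxsfix n] at this
    calc dist x xs ≤ dist x (Φ^[n] x) + dist (Φ^[n] x) xs := dist_triangle _ _ _
      _ ≤ (1 + S) * d + α n * dist x xs := by linarith
  -- pass to the limit n → ∞
  have htend : Filter.Tendsto (fun n : ℕ => (1 + S) * d + α (n+1) * dist x xs)
      Filter.atTop (nhds ((1 + S) * d + 0 * dist x xs)) := by
    exact Filter.Tendsto.add tendsto_const_nhds
      (hsum.tendsto_atTop_zero.mul_const _)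
  have : dist x xs ≤ (1 + S) * d + 0 * dist x xs := by
    refine ge_of_tendsto htend (Filter.Eventually.of_forall fun n => ?_)
    exact key (n+1) (Nat.succ_le_succ (Nat.zero_le _))
  linarith
end

section
/- Let γ be a rank-one projector and Γ a density matrix on ℂⁿ, and set α = tr((I−γ)Γ) = 1 − tr(γΓ). Then α ≤ ‖Γ − γ‖₁ ≤ 2·√(2α), where ‖X‖₁ denotes the trace norm of X. -/
open Matrix ComplexOrder

/-- The positive semidefinite square root of a positive semidefinite matrix
(removed from Mathlib; restored with its old definition). -/
noncomputable def Matrix.PosSemidef.sqrt {n 𝕜 : Type*} [Fintype n] [DecidableEq n] [RCLike 𝕜]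
    {A : Matrix n n 𝕜} (hA : A.PosSemidef) : Matrix n n 𝕜 :=
  hA.1.eigenvectorUnitary.1 * diagonal ((↑) ∘ (√·) ∘ hA.1.eigenvalues) *
  (star hA.1.eigenvectorUnitary : Matrix n n 𝕜)

/-- The trace norm of a matrix: `‖X‖₁ = tr √(XᴴX)`, the sum of the singular values. -/
noncomputable def traceNorm {n : ℕ} (X : Matrix (Fin n) (Fin n) ℂ) : ℝ :=
  ((Matrix.posSemidef_conjTranspose_mul_self X).sqrt.trace).re

/-!
Put `X = Γ - γ` with eigenvalues `μᵢ`, so that `‖X‖₁ = ∑ |μᵢ|` and `∑ μᵢ = tr X = 0`.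
Since `(1 - γ) γ = 0` we have `α = tr ((1 - γ) X)`, and `0 ≤ 1 - γ ≤ 1` bounds this
by `∑ |μᵢ|`. For the upper bound, `∑ μᵢ² = tr X² = tr Γ² - 2 tr (γ Γ) + 1 ≤ 2 α`.
Moreover `X + γ = Γ ≥ 0` with `γ` of rank one, so `X` has at most one negative
eigenvalue `μ₋`; as the eigenvalues sum to zero, `‖X‖₁ = 2 |μ₋| ≤ 2 √(∑ μᵢ²)`.
-/

open scoped MatrixOrder

namespace Matrix

section

variable {m : Type*} [Fintype m]

lemma exists_ne_zero_mulVec_sum_smul_eq_zero {K ι : Type*} [Field K] [Fintype ι]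
    {P : Matrix m m K} (v : ι → m → K) (hP : P.rank < Fintype.card ι) :
    ∃ c : ι → K, c ≠ 0 ∧ P *ᵥ ∑ k, c k • v k = 0 := by
  let f := P.mulVecLin.rangeRestrict ∘ₗ Fintype.linearCombination K v
  have hf : LinearMap.ker f ≠ ⊥ := LinearMap.ker_ne_bot_of_finrank_lt <| by
    rwa [Module.finrank_fintype_fun_eq_card]
  obtain ⟨c, hc, hc0⟩ := Submodule.exists_mem_ne_zero_of_ne_bot hf
  refine ⟨c, hc0, ?_⟩
  simpa [f, Fintype.linearCombination_apply, Subtype.ext_iff, mulVec_sum, mulVec_smul] using hc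

variable [DecidableEq m]

lemma rank_eq_trace_of_isIdempotentElem {K : Type*} [Field K] [CharZero K] {A : Matrix m m K}
    (hA : IsIdempotentElem A) : (A.rank : K) = A.trace := by
  have hA' : IsIdempotentElem (toLin' A) := by
    rw [IsIdempotentElem, Module.End.mul_eq_comp, ← toLin'_mul, hA.eq]
  rw [← trace_toLin'_eq, (LinearMap.IsIdempotentElem.isProj_range _ hA').trace]
  rfl

variable {𝕜 : Type*} [RCLike 𝕜]

lemma IsHermitian.trace_cfc {A : Matrix m m 𝕜} (hA : A.IsHermitian) (f : ℝ → ℝ) :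
    (cfc f A).trace = ∑ i, (f (hA.eigenvalues i) : 𝕜) := by
  rw [hA.cfc_eq, IsHermitian.cfc, trace_map', trace_diagonal]
  rfl

lemma IsHermitian.trace_mul_self {A : Matrix m m 𝕜} (hA : A.IsHermitian) :
    (A * A).trace = ∑ i, ((hA.eigenvalues i ^ 2 : ℝ) : 𝕜) := by
  rw [← sq, ← cfc_pow_id (R := ℝ) A 2, hA.trace_cfc]

lemma PosSemidef.sqrt_eq_cfc {A : Matrix m m 𝕜} (hA : A.PosSemidef) :
    hA.sqrt = cfc Real.sqrt A := by
  rw [hA.1.cfc_eq]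
  rfl

lemma IsHermitian.sqrt_conjTranspose_mul_self {A : Matrix m m 𝕜} (hA : A.IsHermitian) :
    (posSemidef_conjTranspose_mul_self A).sqrt = cfc (fun x : ℝ => |x|) A := by
  rw [PosSemidef.sqrt_eq_cfc, hA.eq, ← sq, ← cfc_pow_id (R := ℝ) A 2,
    ← cfc_comp Real.sqrt (· ^ 2) A]
  exact cfc_congr fun x _ => Real.sqrt_sq_eq_abs x

lemma PosSemidef.re_trace_mul_self_le_sq {A : Matrix m m 𝕜} (hA : A.PosSemidef) :
    RCLike.re (A * A).trace ≤ RCLike.re A.trace ^ 2 := by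
  simp only [hA.1.trace_mul_self, hA.1.trace_eq_sum_eigenvalues, map_sum, RCLike.ofReal_re]
  exact Finset.sum_sq_le_sq_sum_of_nonneg fun i _ => hA.eigenvalues_nonneg i

lemma IsHermitian.re_trace_mul_le_sum_abs_eigenvalues {X P : Matrix m m 𝕜} (hX : X.IsHermitian)
    (hP₀ : 0 ≤ P) (hP₁ : P ≤ 1) :
    RCLike.re (P * X).trace ≤ ∑ i, |hX.eigenvalues i| := by
  set U : Matrix m m 𝕜 := ↑hX.eigenvectorUnitary
  set B := star U * P * U
  have hB₀ : 0 ≤ B := star_left_conjugate_nonneg hP₀ U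
  have hB₁ : B ≤ 1 := by
    simpa [B, U] using star_left_conjugate_le_conjugate hP₁ U
  have hPX : (P * X).trace = ∑ i, B i i * (hX.eigenvalues i : 𝕜) := by
    conv_lhs => rw [hX.spectral_theorem, Unitary.conjStarAlgAut_apply]
    rw [← mul_assoc, ← mul_assoc, trace_mul_comm, ← mul_assoc, ← mul_assoc]
    simp only [trace, diag_apply, mul_diagonal, Function.comp_apply]
    rfl
  rw [hPX, map_sum]
  refine Finset.sum_le_sum fun i _ => ?_
  have h₀ : 0 ≤ RCLike.re (B i i) := (RCLike.nonneg_iff.mp (hB₀.posSemidef.diag_nonneg)).1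
  have h₁ : RCLike.re (B i i) ≤ 1 := by
    simpa only [sub_apply, one_apply_eq, map_sub, RCLike.one_re, sub_nonneg] using
      (RCLike.nonneg_iff.mp ((le_iff.mp hB₁).diag_nonneg (i := i))).1
  rw [RCLike.re_mul_ofReal]
  exact (mul_le_mul_of_nonneg_left (le_abs_self _) h₀).trans
    (mul_le_of_le_one_left (abs_nonneg _) h₁)

lemma IsHermitian.re_dotProduct_mulVec_eigenvectorBasis_pair {X : Matrix m m 𝕜}
    (hX : X.IsHermitian) {i j : m} (hij : i ≠ j) (s t : 𝕜) :
    RCLike.re (star (s • ⇑(hX.eigenvectorBasis i) + t • ⇑(hX.eigenvectorBasis j)) ⬝ᵥ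
        X *ᵥ (s • ⇑(hX.eigenvectorBasis i) + t • ⇑(hX.eigenvectorBasis j))) =
      ‖s‖ ^ 2 * hX.eigenvalues i + ‖t‖ ^ 2 * hX.eigenvalues j := by
  have hb : ∀ a b, star ⇑(hX.eigenvectorBasis a) ⬝ᵥ ⇑(hX.eigenvectorBasis b) =
      if a = b then 1 else 0 := fun a b => by
    rw [← orthonormal_iff_ite.mp hX.eigenvectorBasis.orthonormal a b,
      EuclideanSpace.inner_eq_star_dotProduct, dotProduct_comm]
  simp only [mulVec_add, mulVec_smul, hX.mulVec_eigenvectorBasis, star_add, star_smul,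
    add_dotProduct, dotProduct_add, smul_dotProduct, dotProduct_smul, hb, hij, hij.symm,
    if_true, if_false, smul_eq_mul, mul_one, mul_zero, add_zero, zero_add,
    RCLike.real_smul_eq_coe_mul, RCLike.star_def]
  rw [mul_left_comm s, mul_left_comm t, RCLike.mul_conj, RCLike.mul_conj]
  norm_cast
  ring

-- Some nonzero combination of the two eigenvectors lies in `ker P`, and there `X + P` is negative.
lemma IsHermitian.eq_of_eigenvalues_neg {X P : Matrix m m 𝕜} (hX : X.IsHermitian)
    (hXP : 0 ≤ X + P) (hP : P.rank ≤ 1) {i j : m} (hi : hX.eigenvalues i < 0)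
    (hj : hX.eigenvalues j < 0) : i = j := by
  by_contra hij
  obtain ⟨c, hc0, hPc⟩ := exists_ne_zero_mulVec_sum_smul_eq_zero (P := P)
    ![⇑(hX.eigenvectorBasis i), ⇑(hX.eigenvectorBasis j)] (by simp; omega)
  simp only [Fin.sum_univ_two, Matrix.cons_val_zero, Matrix.cons_val_one] at hPc
  have hq := hXP.posSemidef.re_dotProduct_nonneg
    (c 0 • ⇑(hX.eigenvectorBasis i) + c 1 • ⇑(hX.eigenvectorBasis j))
  rw [add_mulVec, hPc, add_zero, hX.re_dotProduct_mulVec_eigenvectorBasis_pair hij] at hq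
  have hc : c 0 ≠ 0 ∨ c 1 ≠ 0 := by
    contrapose! hc0
    ext k
    fin_cases k <;> simp [hc0]
  rcases hc with hc | hc
  · linarith [mul_neg_of_pos_of_neg (pow_pos (norm_pos_iff.mpr hc) 2) hi,
      mul_nonpos_of_nonneg_of_nonpos (sq_nonneg ‖c 1‖) hj.le]
  · linarith [mul_neg_of_pos_of_neg (pow_pos (norm_pos_iff.mpr hc) 2) hj,
      mul_nonpos_of_nonneg_of_nonpos (sq_nonneg ‖c 0‖) hi.le]

lemma re_trace_mul_self_sub_le {Γ γ : Matrix m m 𝕜} (hΓ : Γ.PosSemidef) (hΓtr : Γ.trace = 1)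
    (hγ : IsStarProjection γ) (hγtr : γ.trace = 1) :
    RCLike.re ((Γ - γ) * (Γ - γ)).trace ≤ 2 * RCLike.re ((1 - γ) * Γ).trace := by
  have hΓΓ := hΓ.re_trace_mul_self_le_sq
  rw [hΓtr, RCLike.one_re, one_pow] at hΓΓ
  have hexp : ((Γ - γ) * (Γ - γ)).trace = (Γ * Γ).trace - 2 * (γ * Γ).trace + 1 := by
    rw [sub_mul, mul_sub, mul_sub, hγ.isIdempotentElem.eq, trace_sub, trace_sub, trace_sub, hγtr,
      trace_mul_comm Γ γ]
    ring
  rw [hexp, sub_mul, one_mul, trace_sub, hΓtr]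
  simp only [map_add, map_sub, RCLike.one_re, RCLike.ofNat_mul_re]
  linarith

end

end Matrix

lemma traceNorm_eq_sum_abs_eigenvalues {k : ℕ} {X : Matrix (Fin k) (Fin k) ℂ}
    (hX : X.IsHermitian) : traceNorm X = ∑ i, |hX.eigenvalues i| := by
  rw [traceNorm, hX.sqrt_conjTranspose_mul_self, hX.trace_cfc, Complex.re_sum]
  simp

lemma sum_abs_le_two_mul_sqrt_sum_sq {ι : Type*} [Fintype ι] {μ : ι → ℝ} (hsum : ∑ i, μ i = 0)
    (hneg : ∀ i j, μ i < 0 → μ j < 0 → i = j) : ∑ i, |μ i| ≤ 2 * √(∑ i, μ i ^ 2) := by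
  by_cases h : ∃ i₀, μ i₀ < 0
  · obtain ⟨i₀, hi₀⟩ := h
    have hexcess : ∑ i, (|μ i| - μ i) = |μ i₀| - μ i₀ := by
      refine Finset.sum_eq_single i₀ (fun j _ hj => ?_) (by simp)
      have : 0 ≤ μ j := not_lt.mp fun h => hj (hneg j i₀ h hi₀)
      rw [abs_of_nonneg this, sub_self]
    have hle : |μ i₀| ≤ √(∑ i, μ i ^ 2) :=
      Real.abs_le_sqrt (Finset.single_le_sum (fun i _ => sq_nonneg (μ i)) (Finset.mem_univ i₀))
    rw [Finset.sum_sub_distrib, hsum, abs_of_neg hi₀] at hexcess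
    rw [abs_of_neg hi₀] at hle
    linarith
  · simp only [not_exists, not_lt] at h
    simp only [abs_of_nonneg (h _), hsum]
    positivity

theorem knowles_pickl_trace_norm_bounds {n : ℕ}
    (γ Γ : Matrix (Fin (n + 1)) (Fin (n + 1)) ℂ)
    (hγherm : γᴴ = γ) (hγidem : γ * γ = γ) (hγtr : γ.trace = 1)
    (hΓ : Γ.PosSemidef) (hΓtr : Γ.trace = 1)
    (α : ℝ) (hα : α = ((1 - γ) * Γ).trace.re) :
    α ≤ traceNorm (Γ - γ) ∧ traceNorm (Γ - γ) ≤ 2 * Real.sqrt (2 * α) := by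
  have hγ : IsStarProjection γ := ⟨hγidem, hγherm⟩
  have hX : (Γ - γ).IsHermitian := hΓ.1.sub hγherm
  have hsum : ∑ i, hX.eigenvalues i = 0 := by
    have h := hX.trace_eq_sum_eigenvalues
    rw [trace_sub, hΓtr, hγtr, sub_self] at h
    exact RCLike.ofReal_eq_zero.mp (by push_cast; exact h.symm)
  have hsq : ∑ i, hX.eigenvalues i ^ 2 ≤ 2 * α := by
    have h := re_trace_mul_self_sub_le hΓ hΓtr hγ hγtr
    simpa only [hX.trace_mul_self, map_sum, RCLike.ofReal_re, RCLike.re_to_complex, ← hα]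
      using h
  have hneg : ∀ i j, hX.eigenvalues i < 0 → hX.eigenvalues j < 0 → i = j := by
    have hrank : γ.rank = 1 := by
      exact_mod_cast (rank_eq_trace_of_isIdempotentElem hγidem).trans hγtr
    exact fun i j => hX.eq_of_eigenvalues_neg (by simpa using hΓ.nonneg) hrank.le
  rw [traceNorm_eq_sum_abs_eigenvalues hX]
  constructor
  · have hαX : α = ((1 - γ) * (Γ - γ)).trace.re := by
      rw [hα, mul_sub, hγ.one_sub_mul_self, sub_zero]
    rw [hαX]
    exact hX.re_trace_mul_le_sum_abs_eigenvalues hγ.one_sub_nonneg (sub_le_self _ hγ.nonneg)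
  · calc ∑ i, |hX.eigenvalues i| ≤ 2 * √(∑ i, hX.eigenvalues i ^ 2) :=
          sum_abs_le_two_mul_sqrt_sum_sq hsum hneg
      _ ≤ 2 * √(2 * α) := by gcongr
end
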